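/- arXiv:1001.4754 — 2 statements merged into one kernel-verified Lean document; each statement's English description precedes it below -/
import Mathlib

section
/- Let H be a complex Hilbert space, N ≥ 2 an integer, A₁, …, A_N bounded operators on H, and (B_n)_{n≥0} a sequence of bounded operators on H with Σ_{n≥0} ‖B_n‖ εⁿ < ∞ for some ε > 0. Suppose that for every real k ∈ (0, ε) the operator S(k) := I + (ik/2π)·F(k), where F(k) := Σ_{j=1}^{N} k^{−j} A_j + Σ_{n≥0} kⁿ B_n (the series converging in operator norm), is an isometry of H. Then A_j = 0 for every j with 2 ≤ j ≤ N; i.e., the operator-valued function F has a pole of order at most one at k = 0. -/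
/-!
Since `S(k)` is an isometry, `‖S(k) - 1‖ ≤ 2`, so `k • F(k)` stays bounded as `k → 0⁺`; the power
series part is bounded too, hence so is `k` times the polar part `P(k) = ∑ k⁻ʲ • A j`. Now
`k ^ N • P(k)` is a polynomial in `k` with constant term `A N`, while it equals `k ^ (N - 1)` times
a bounded function; for `N ≥ 2` it therefore tends both to `A N` and to `0`. So `A N = 0`, and
descending induction on `N` kills every `A j` with `j ≥ 2`.
-/

open Filter Topology Finset

section Laurent

variable {𝕜 E : Type*} [NontriviallyNormedField 𝕜] [NormedAddCommGroup E] [NormedSpace 𝕜 E]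

theorem tendsto_pow_smul_sum_zpow_smul (a : ℕ → E) {N : ℕ} (hN : 1 ≤ N) :
    Tendsto (fun z : 𝕜 => z ^ N • ∑ j ∈ Icc 1 N, z ^ (-(j : ℤ)) • a j) (𝓝[≠] 0) (𝓝 (a N)) := by
  have hpoly : Continuous fun z : 𝕜 => ∑ j ∈ Icc 1 N, z ^ (N - j) • a j := by fun_prop
  have hzero : ∑ j ∈ Icc 1 N, (0 : 𝕜) ^ (N - j) • a j = a N := by
    rw [sum_eq_single N (fun j hj hjN => by rw [zero_pow (by grind), zero_smul])
      (fun h => absurd (mem_Icc.2 ⟨hN, le_rfl⟩) h), Nat.sub_self, pow_zero, one_smul]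
  refine ((hpoly.tendsto' 0 _ hzero).mono_left nhdsWithin_le_nhds).congr' ?_
  filter_upwards [self_mem_nhdsWithin] with z hz
  rw [smul_sum]
  refine sum_congr rfl fun j hj => ?_
  rw [smul_smul, zpow_neg, zpow_natCast, ← pow_sub₀ z hz (mem_Icc.1 hj).2]

theorem eq_zero_of_isBoundedUnder_smul_sum_zpow_smul {l : Filter 𝕜} [l.NeBot]
    (hl : l ≤ 𝓝[≠] 0) (a : ℕ → E) (N : ℕ)
    (hbdd : IsBoundedUnder (· ≤ ·) l fun z => ‖z • ∑ j ∈ Icc 1 N, z ^ (-(j : ℤ)) • a j‖) :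
    ∀ j, 2 ≤ j → j ≤ N → a j = 0 := by
  induction N with
  | zero => omega
  | succ N ih =>
    rcases N.eq_zero_or_pos with rfl | hN
    · omega
    have htop : a (N + 1) = 0 := by
      have hpow : Tendsto (fun z : 𝕜 => z ^ N) l (𝓝 0) :=
        ((continuous_pow N).tendsto' 0 0 (zero_pow hN.ne')).mono_left
          (hl.trans nhdsWithin_le_nhds)
      refine tendsto_nhds_unique ((tendsto_pow_smul_sum_zpow_smul a (by omega)).mono_left hl)
        ((hpow.zero_smul_isBoundedUnder_le hbdd).congr fun z => ?_)
      rw [smul_smul, pow_succ]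
    have hsum : ∀ z : 𝕜, ∑ j ∈ Icc 1 (N + 1), z ^ (-(j : ℤ)) • a j =
        ∑ j ∈ Icc 1 N, z ^ (-(j : ℤ)) • a j := fun z => by
      rw [sum_Icc_succ_top (by omega), htop, smul_zero, add_zero]
    intro j hj2 hj
    rcases hj.eq_or_lt with rfl | hlt
    · exact htop
    · exact ih (by simpa only [hsum] using hbdd) j hj2 (by omega)

end Laurent

theorem ContinuousLinearMap.norm_le_two_of_norm_one_add_apply {𝕜 E : Type*}
    [NontriviallyNormedField 𝕜] [SeminormedAddCommGroup E] [NormedSpace 𝕜 E] (T : E →L[𝕜] E)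
    (h : ∀ x, ‖(1 + T) x‖ = ‖x‖) : ‖T‖ ≤ 2 :=
  calc ‖T‖ = ‖(1 + T) - 1‖ := by rw [add_sub_cancel_left]
    _ ≤ ‖1 + T‖ + ‖(1 : E →L[𝕜] E)‖ := norm_sub_le _ _
    _ ≤ 1 + 1 := add_le_add (opNorm_le_bound _ zero_le_one fun x => (h x).trans_le (one_mul _).ge)
        norm_id_le
    _ = 2 := one_add_one_eq_two

theorem norm_tsum_pow_smul_le {𝕜 E : Type*} [NormedField 𝕜] [SeminormedAddCommGroup E]
    [NormedSpace 𝕜 E] (B : ℕ → E) {z : 𝕜} {r : ℝ} (hz : ‖z‖ ≤ r)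
    (hB : Summable fun n => ‖B n‖ * r ^ n) :
    ‖∑' n, z ^ n • B n‖ ≤ ∑' n, ‖B n‖ * r ^ n := by
  have hle : ∀ n, ‖z ^ n • B n‖ ≤ ‖B n‖ * r ^ n := fun n => by
    rw [norm_smul, norm_pow, mul_comm]
    gcongr
  have hs := hB.of_nonneg_of_le (fun n => norm_nonneg _) hle
  exact (norm_tsum_le_tsum_norm hs).trans (hs.tsum_le_tsum hle hB)

theorem norm_ofReal_smul_le_of_isometry {E : Type*} [NormedAddCommGroup E] [NormedSpace ℂ E]
    (F : E →L[ℂ] E) {k : ℝ} (hk : 0 < k)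
    (h : ∀ x, ‖(1 + (Complex.I * k / (2 * Real.pi) : ℂ) • F) x‖ = ‖x‖) :
    ‖(k : ℂ) • F‖ ≤ 4 * Real.pi := by
  have hS := ((Complex.I * k / (2 * Real.pi) : ℂ) • F).norm_le_two_of_norm_one_add_apply h
  rw [norm_smul] at hS ⊢
  simp only [Complex.norm_div, Complex.norm_mul, Complex.norm_I, Complex.norm_real,
    Real.norm_of_nonneg hk.le, Real.norm_of_nonneg Real.pi_pos.le, one_mul,
    Complex.norm_ofNat] at hS ⊢
  rw [div_mul_eq_mul_div, div_le_iff₀ (by positivity)] at hS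
  linarith

theorem unitarity_forces_first_order_pole_general
    {H : Type*} [NormedAddCommGroup H] [InnerProductSpace ℂ H]
    (N : ℕ) (A B : ℕ → (H →L[ℂ] H)) (ε : ℝ) (hε : 0 < ε)
    (hB : Summable fun n : ℕ => ‖B n‖ * ε ^ n)
    (hiso : ∀ k : ℝ, 0 < k → k < ε → ∀ x : H,
      ‖((1 : H →L[ℂ] H) + (Complex.I * k / (2 * Real.pi)) •
          ((∑ j ∈ Finset.Icc 1 N, ((k : ℂ) ^ (-(j : ℤ))) • A j) +
            ∑' n : ℕ, ((k : ℂ) ^ n) • B n)) x‖ = ‖x‖) :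
    ∀ j : ℕ, 2 ≤ j → j ≤ N → A j = 0 := by
  set G : ℂ → (H →L[ℂ] H) := fun z => ∑ j ∈ Icc 1 N, z ^ (-(j : ℤ)) • A j
  set M := ∑' n, ‖B n‖ * ε ^ n
  have hbound : ∀ k : ℝ, 0 < k → k < ε → ‖(k : ℂ) • G k‖ ≤ 4 * Real.pi + ε * M := by
    intro k hk hkε
    set T := ∑' n : ℕ, ((k : ℂ) ^ n) • B n
    set F := G k + T
    have hF := norm_ofReal_smul_le_of_isometry F hk (hiso k hk hkε)
    have hT := norm_tsum_pow_smul_le B (z := (k : ℂ)) (by simpa [abs_of_pos hk] using hkε.le) hB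
    calc ‖(k : ℂ) • G k‖ = ‖(k : ℂ) • F - (k : ℂ) • T‖ := by
          rw [← smul_sub, add_sub_cancel_right]
      _ ≤ ‖(k : ℂ) • F‖ + ‖(k : ℂ) • T‖ := norm_sub_le _ _
      _ ≤ 4 * Real.pi + ε * M := by
          gcongr
          rw [norm_smul, Complex.norm_real, Real.norm_of_nonneg hk.le]
          gcongr
  have hl : Tendsto Complex.ofReal (𝓝[>] 0) (𝓝[≠] 0) := by
    simpa using Complex.continuous_ofReal.continuousWithinAt.tendsto_nhdsWithin
      (s := Set.Ioi 0) (x := 0) (t := {0}ᶜ) fun k hk => by simpa using hk.ne'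
  refine eq_zero_of_isBoundedUnder_smul_sum_zpow_smul hl A N
    (isBoundedUnder_of_eventually_le (a := 4 * Real.pi + ε * M) (eventually_map.2 ?_))
  filter_upwards [Ioo_mem_nhdsGT hε] with k hk
  exact hbound k hk.1 hk.2

/-- If for every `k ∈ (0, ε)` the operator
`S(k) = I + (ik/2π)·F(k)` is an isometry, where
`F(k) = Σ_{j=1}^N k^{-j} A_j + Σ_{n≥0} k^n B_n` with `Σ ‖B_n‖ εⁿ < ∞`,
then `A_j = 0` for all `2 ≤ j ≤ N`: the pole of `F` at `k = 0` has order at most one. -/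
theorem unitarity_forces_first_order_pole
    {H : Type*} [NormedAddCommGroup H] [InnerProductSpace ℂ H] [CompleteSpace H]
    (N : ℕ) (hN : 2 ≤ N) (A B : ℕ → (H →L[ℂ] H)) (ε : ℝ) (hε : 0 < ε)
    (hB : Summable fun n : ℕ => ‖B n‖ * ε ^ n)
    (hiso : ∀ k : ℝ, 0 < k → k < ε → ∀ x : H,
      ‖((1 : H →L[ℂ] H) + (Complex.I * k / (2 * Real.pi)) •
          ((∑ j ∈ Finset.Icc 1 N, ((k : ℂ) ^ (-(j : ℤ))) • A j) +
            ∑' n : ℕ, ((k : ℂ) ^ n) • B n)) x‖ = ‖x‖) :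
    ∀ j : ℕ, 2 ≤ j → j ≤ N → A j = 0 :=
  unitarity_forces_first_order_pole_general N A B ε hε hB hiso
end

section
/- Let ς be a complex-analytic function on a neighborhood of 0 in ℂ with ς(0) real and ς(0) < 0. Then there exist Z₀ > 0 and C > 0 such that for every real Z ≥ Z₀ and each sign s ∈ {+1, −1} there exists k ∈ ℂ satisfying −Z k² ς(k) = 1 and |k − ( s/√(Z |ς(0)|) + ς'(0)/(2 Z ς(0)²) )| ≤ C Z^{−3/2}. -/
/-!
Write `ς 0 = -a²` with `a > 0` and let `g` be the principal branch of `√(-ς)`, so `g 0 = a` and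
`2 a g'(0) = -ς'(0)`. Since `-k² ς(k) = (k g(k))²`, every solution of `F k = s / √Z`, where
`F k = k g(k)`, is a root; as `F'(0) = a ≠ 0`, the local inverse `G` of `F` provides one. Strict differentiability makes `F` bi-Lipschitz near `0`, hence `|G w - p w| ≲ |w - F (p w)|`
for the candidate `p w = w / a - g'(0) w² / a³`; the Taylor expansion
`F k = a k + g'(0) k² + O(k³)` makes the right-hand side `O(w³)`.
-/

open Filter Asymptotics Topology

theorem Asymptotics.isBigO_mul_of_tendsto {α 𝕜 : Type*} [NormedField 𝕜] {l : Filter α}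
    {f g : α → 𝕜} {c : 𝕜} (hg : Tendsto g l (𝓝 c)) : (fun x => f x * g x) =O[l] f := by
  simpa using (isBigO_refl f l).mul (hg.isBigO_one 𝕜)

theorem AnalyticAt.isBigO_sub_sub_smul_deriv {𝕜 E : Type*} [NontriviallyNormedField 𝕜]
    [NormedAddCommGroup E] [NormedSpace 𝕜 E] {f : 𝕜 → E} {x : 𝕜} (hf : AnalyticAt 𝕜 f x) :
    (fun y => f y - f x - (y - x) • deriv f x) =O[𝓝 x] fun y => (y - x) ^ 2 := by
  obtain ⟨p, hp⟩ := hf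
  have hslope : DifferentiableAt 𝕜 (dslope f x) x :=
    hp.has_fpower_series_dslope_fslope.differentiableAt
  have hfactor :
      ∀ y, f y - f x - (y - x) • deriv f x = (y - x) • (dslope f x y - dslope f x x) := by
    intro y
    rw [smul_sub, sub_smul_dslope, dslope_same]
  simp_rw [hfactor, sq]
  exact (isBigO_refl (fun y => y - x) (𝓝 x)).smul hslope.isBigO_sub

theorem AnalyticAt.exists_sq_eq {ψ : ℂ → ℂ} {x : ℂ} {c : ℝ} (hψ : AnalyticAt ℂ ψ x)
    (hc : 0 < c) (hψx : ψ x = (c : ℂ) ^ 2) :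
    ∃ g : ℂ → ℂ, AnalyticAt ℂ g x ∧ g x = c ∧ (∀ k, g k ^ 2 = ψ k) ∧
      2 * c * deriv g x = deriv ψ x := by
  have hslit : ψ x ∈ Complex.slitPlane := by
    rw [hψx, ← Complex.ofReal_pow]
    exact Complex.ofReal_mem_slitPlane.2 (by positivity)
  have hg : AnalyticAt ℂ (fun k => ψ k ^ (2⁻¹ : ℂ)) x := hψ.cpow analyticAt_const hslit
  have hgx : ψ x ^ (2⁻¹ : ℂ) = c := by
    rw [hψx]
    exact Complex.sq_cpow_two_inv (by simpa using hc)
  have hsq : ∀ k, (ψ k ^ (2⁻¹ : ℂ)) ^ 2 = ψ k := fun k => Complex.cpow_ofNat_inv_pow _ 2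
  refine ⟨_, hg, hgx, hsq, ?_⟩
  have hderiv := hg.differentiableAt.hasDerivAt.pow 2
  rw [show (fun k => ψ k ^ (2⁻¹ : ℂ)) ^ 2 = ψ from funext hsq, hgx] at hderiv
  rw [hderiv.deriv]
  push_cast
  ring

theorem HasStrictDerivAt.isBigO_localInverse_sub {𝕜 : Type*} [NontriviallyNormedField 𝕜]
    [CompleteSpace 𝕜] {F : 𝕜 → 𝕜} {a b : 𝕜} (hF : HasStrictDerivAt F a 0) (ha : a ≠ 0)
    (hF0 : F 0 = 0) (hTaylor : (fun k => F k - (a * k + b * k ^ 2)) =O[𝓝 0] fun k => k ^ 3) :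
    (fun w => hF.localInverse F a 0 ha w - (w / a - b * w ^ 2 / a ^ 3)) =O[𝓝 0]
      fun w => w ^ 3 := by
  set G := hF.localInverse F a 0 ha
  set p : 𝕜 → 𝕜 := fun w => w / a - b * w ^ 2 / a ^ 3
  have hG : Tendsto G (𝓝 0) (𝓝 0) := by
    have hcont := (hF.to_localInverse ha).hasDerivAt.continuousAt
    have hG0 : G (F 0) = 0 := HasStrictFDerivAt.localInverse_apply_image ..
    rw [hF0] at hcont hG0
    have hGt : Tendsto G (𝓝 0) (𝓝 (G 0)) := hcont.tendsto
    rwa [hG0] at hGt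
  have hp : Tendsto p (𝓝 0) (𝓝 0) := by
    have : Continuous p := by fun_prop
    simpa [p] using this.tendsto 0
  have hpO : p =O[𝓝 0] fun w => w := by
    have hp_eq : p = fun w => w * (1 / a - b / a ^ 3 * w) := by
      ext w; simp only [p]; ring
    rw [hp_eq]
    exact isBigO_mul_of_tendsto
      ((by fun_prop : Continuous fun w : 𝕜 => 1 / a - b / a ^ 3 * w).tendsto 0)
  have hright : ∀ᶠ w in 𝓝 0, F (G w) = w := hF0 ▸ hF.eventually_right_inverse ha
  have hantilip : (fun w => G w - p w) =O[𝓝 0] fun w => F (G w) - F (p w) :=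
    (hF.isTheta_sub ha).isBigO_symm.comp_tendsto (hG.prodMk_nhds hp)
  have hquad : (fun w => w - (a * p w + b * p w ^ 2)) =O[𝓝 0] fun w => w ^ 3 := by
    have hquad_eq : (fun w => w - (a * p w + b * p w ^ 2)) =
        fun w => w ^ 3 * (2 * b ^ 2 / a ^ 4 - b ^ 3 / a ^ 6 * w) := by
      ext w; simp only [p]; field_simp; ring
    rw [hquad_eq]
    exact isBigO_mul_of_tendsto
      ((by fun_prop : Continuous fun w : 𝕜 => 2 * b ^ 2 / a ^ 4 - b ^ 3 / a ^ 6 * w).tendsto 0)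
  have hres : (fun w => w - F (p w)) =O[𝓝 0] fun w => w ^ 3 :=
    (hquad.sub ((hTaylor.comp_tendsto hp).trans (hpO.pow 3))).congr_left
      fun w => by simp only [Function.comp_apply]; ring
  exact hantilip.trans (hres.congr' (hright.mono fun w hw => by simp [hw]) .rfl)

theorem exists_root_near_quadratic_approx {ς : ℂ → ℂ} {a : ℝ} (hς : AnalyticAt ℂ ς 0)
    (ha : 0 < a) (hς0 : ς 0 = -(a : ℂ) ^ 2) :
    ∃ C > 0, ∀ᶠ w in 𝓝 (0 : ℂ), ∃ k, -(k ^ 2 * ς k) = w ^ 2 ∧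
      ‖k - (w / a + deriv ς 0 * w ^ 2 / (2 * a ^ 4))‖ ≤ C * ‖w‖ ^ 3 := by
  obtain ⟨g, hg, hg0, hgsq, hgderiv⟩ := hς.neg.exists_sq_eq ha (by simp [hς0])
  have ha0 : (a : ℂ) ≠ 0 := by exact_mod_cast ha.ne'
  set b := deriv g 0
  set F : ℂ → ℂ := fun k => k * g k
  have hF : HasStrictDerivAt F a 0 := by
    have h := (hasStrictDerivAt_id (0 : ℂ)).mul hg.hasStrictDerivAt
    simp only [id, one_mul, zero_mul, add_zero, hg0] at h
    exact h
  have hF0 : F 0 = 0 := zero_mul _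
  have hTaylor : (fun k => F k - (a * k + b * k ^ 2)) =O[𝓝 0] fun k => k ^ 3 := by
    have h := (isBigO_refl (fun k : ℂ => k) (𝓝 0)).mul hg.isBigO_sub_sub_smul_deriv
    simp only [sub_zero, smul_eq_mul, hg0] at h
    exact h.congr (fun k => by simp only [F]; ring) (fun k => by ring)
  obtain ⟨C, hC, hCw⟩ := (hF.isBigO_localInverse_sub ha0 hF0 hTaylor).exists_pos
  refine ⟨C, hC, ?_⟩
  filter_upwards [hCw.bound, hF0 ▸ hF.eventually_right_inverse ha0] with w hw hFw
  set k := hF.localInverse F a 0 ha0 w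
  refine ⟨k, ?_, ?_⟩
  · calc -(k ^ 2 * ς k) = (k * g k) ^ 2 := by rw [mul_pow, hgsq, Pi.neg_apply]; ring
      _ = w ^ 2 := congrArg (· ^ 2) hFw
  · have hb : deriv ς 0 = -(2 * a * b) := by
      rw [hgderiv, deriv.neg, neg_neg]
    have htarget : w / a + deriv ς 0 * w ^ 2 / (2 * a ^ 4) = w / a - b * w ^ 2 / a ^ 3 := by
      rw [hb]
      field_simp
      ring
    rw [htarget, ← norm_pow]
    exact hw

theorem Real.rpow_neg_three_div_two {x : ℝ} (hx : 0 ≤ x) : x ^ (-(3 : ℝ) / 2) = (√x)⁻¹ ^ 3 := by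
  rw [Real.sqrt_eq_rpow, ← Real.rpow_neg_one, ← Real.rpow_mul hx, ← Real.rpow_natCast,
    ← Real.rpow_mul hx]
  norm_num

/-- Scalar core of the springy-coating resonance theorem: if `ς` is
analytic near `0` with `ς(0)` real and negative, then there are `Z₀, C > 0` such that
for every `Z ≥ Z₀` and each sign `s = ±1` there is a root `k` of `-Z k² ς(k) = 1` with
`|k - (s/√(Z|ς(0)|) + ς'(0)/(2Zς(0)²))| ≤ C Z^{-3/2}`. -/
theorem springy_coating_resonances
    (ς : ℂ → ℂ) (hς : AnalyticAt ℂ ς 0)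
    (him : (ς 0).im = 0) (hre : (ς 0).re < 0) :
    ∃ Z₀ > (0 : ℝ), ∃ C > (0 : ℝ), ∀ Z : ℝ, Z₀ ≤ Z → ∀ s : ℝ, s = 1 ∨ s = -1 →
      ∃ k : ℂ, -(Z : ℂ) * k ^ 2 * ς k = 1 ∧
        ‖k - (((s / Real.sqrt (Z * ‖ς 0‖)) : ℝ) +
            deriv ς 0 / (2 * (Z : ℂ) * (ς 0) ^ 2))‖
          ≤ C * Z ^ (-(3 : ℝ) / 2) := by
  set a := √‖ς 0‖
  have hς0 : ς 0 = -(a : ℂ) ^ 2 := by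
    have hreal : ς 0 = ((ς 0).re : ℂ) := Complex.ext rfl (by simp [him])
    rw [← Complex.ofReal_pow, Real.sq_sqrt (norm_nonneg _), hreal, Complex.norm_real,
      Real.norm_of_nonpos hre.le, Complex.ofReal_neg, neg_neg]
  have ha : 0 < a := Real.sqrt_pos.2 (norm_pos_iff.2 fun h => by simp [h] at hre)
  obtain ⟨C, hC, hroot⟩ := exists_root_near_quadratic_approx hς ha hς0
  obtain ⟨ρ, hρ, hball⟩ := Metric.eventually_nhds_iff.1 hroot
  have hlarge : ∀ᶠ Z : ℝ in atTop, 0 < Z ∧ (√Z)⁻¹ < ρ :=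
    (eventually_gt_atTop 0).and
      ((tendsto_inv_atTop_zero.comp Real.tendsto_sqrt_atTop).eventually (gt_mem_nhds hρ))
  obtain ⟨Z₀, hZ₀⟩ := eventually_atTop.1 hlarge
  refine ⟨Z₀, (hZ₀ Z₀ le_rfl).1, C, hC, fun Z hZ s hs => ?_⟩
  obtain ⟨hZ, hZρ⟩ := hZ₀ Z hZ
  have hs1 : |s| = 1 := by rcases hs with rfl | rfl <;> norm_num
  set w : ℂ := ((s / √Z : ℝ) : ℂ)
  have hnorm : ‖w‖ = (√Z)⁻¹ := by
    rw [Complex.norm_real, Real.norm_eq_abs, abs_div, hs1, abs_of_nonneg (Real.sqrt_nonneg _),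
      one_div]
  have hw2 : w ^ 2 = (Z : ℂ)⁻¹ := by
    rw [← Complex.ofReal_pow, div_pow, Real.sq_sqrt hZ.le, ← sq_abs, hs1, one_pow, one_div,
      Complex.ofReal_inv]
  obtain ⟨k, hk, hkw⟩ := hball (show dist w 0 < ρ by rwa [dist_zero_right, hnorm])
  refine ⟨k, ?_, ?_⟩
  · calc -(Z : ℂ) * k ^ 2 * ς k = Z * -(k ^ 2 * ς k) := by ring
      _ = 1 := by rw [hk, hw2, mul_inv_cancel₀ (by exact_mod_cast hZ.ne')]
  · have htarget : ((s / √(Z * ‖ς 0‖) : ℝ) : ℂ) + deriv ς 0 / (2 * Z * ς 0 ^ 2)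
        = w / a + deriv ς 0 * w ^ 2 / (2 * a ^ 4) := by
      have hsqrt : (√Z : ℂ) ≠ 0 := by exact_mod_cast (Real.sqrt_pos.2 hZ).ne'
      have ha0 : (a : ℂ) ≠ 0 := by exact_mod_cast ha.ne'
      rw [hw2, Real.sqrt_mul hZ.le, show √‖ς 0‖ = a from rfl, hς0]
      simp only [w]
      push_cast
      field_simp
    rw [htarget, Real.rpow_neg_three_div_two hZ.le, ← hnorm]
    exact hkw
end
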